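/- Let 0 < λ₁ ≤ λ₂ ≤ ⋯ be a nondecreasing sequence tending to infinity whose counting function satisfies #{m ≥ 1 : λ_m ≤ x} ≤ C x^{d/2} for all x > 0, where d ≥ 1. Then there is a constant C' (depending only on C, d, λ₁) such that for all t ∈ (0, 1], Σ_{m≥1} e^{−λ_m t} λ_m^{−d/2} ≤ C' (1 + log(1/t)). -/

import Mathlib

/-!
Evaluating the counting bound at `x = λ_m` gives `m + 1 ≤ C λ_m^{d/2}`, i.e.
`λ_m^{-d/2} ≤ C/(m+1)`. So every term is at most `C/(m+1)`, and, using `e^{-x} ≤ d!/x^d`,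
also at most `d! C³ t^{-d}/(m+1)²`. Summing the first bound up to `N ≈ t^{-d}` costs
`C (1 + log N)`, which is `O(1 + log(1/t))`, and the second bound makes the tail beyond `N`
bounded uniformly in `t`.
-/

open Filter Real Finset
open scoped Nat

section Counting

variable {lam : ℕ → ℝ}

lemma finite_setOf_le_of_tendsto_atTop (htend : Tendsto lam atTop atTop) (x : ℝ) :
    {m | lam m ≤ x}.Finite := by
  have h := htend.eventually_gt_atTop x
  rw [← Nat.cofinite_eq_atTop, eventually_cofinite] at h
  exact h.subset fun m hm => not_lt.2 hm

lemma succ_le_ncard_setOf_le (hmono : Monotone lam) (htend : Tendsto lam atTop atTop) (m : ℕ) :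
    m + 1 ≤ {k | lam k ≤ lam m}.ncard := by
  have h := Set.ncard_le_ncard (fun k (hk : k ∈ Set.Iic m) => hmono hk)
    (finite_setOf_le_of_tendsto_atTop htend (lam m))
  rwa [← Finset.coe_Iic, Set.ncard_coe_finset, Nat.card_Iic] at h

lemma rpow_neg_le_div_succ_of_ncard_le {C s : ℝ} (hlam : ∀ m, 0 < lam m) (hmono : Monotone lam)
    (htend : Tendsto lam atTop atTop)
    (hcount : ∀ x > (0 : ℝ), ({m | lam m ≤ x}.ncard : ℝ) ≤ C * x ^ s) (m : ℕ) :
    lam m ^ (-s) ≤ C / (m + 1) := by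
  have hm : (m : ℝ) + 1 ≤ C * lam m ^ s :=
    (by exact_mod_cast succ_le_ncard_setOf_le hmono htend m : (m : ℝ) + 1 ≤ _).trans
      (hcount _ (hlam m))
  rw [rpow_neg (hlam m).le, le_div_iff₀ (by positivity)]
  rwa [inv_mul_le_iff₀ (rpow_pos_of_pos (hlam m) s), mul_comm]

end Counting

lemma sum_range_inv_add_succ_sq_le (N n : ℕ) :
    ∑ k ∈ range n, (((k : ℝ) + N + 1) ^ 2)⁻¹ ≤ (2 : ℝ) / (N + 1) := by
  have hshift : ∑ k ∈ range n, ((((k + (N + 1) : ℕ) : ℝ) ^ 2)⁻¹)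
      = ∑ i ∈ Ioo N (n + (N + 1)), ((i : ℝ) ^ 2)⁻¹ := by
    rw [range_eq_Ico, sum_Ico_add' (fun i : ℕ => ((i : ℝ) ^ 2)⁻¹), zero_add,
      ← Order.succ_eq_add_one, Finset.Ico_succ_left_eq_Ioo]
  push_cast at hshift
  simpa only [add_assoc, hshift] using sum_Ioo_inv_sq_le N (n + (N + 1))

lemma tsum_le_of_le_div_succ_of_le_div_succ_sq {f : ℕ → ℝ} {a b : ℝ}
    (hf0 : ∀ m, 0 ≤ f m) (hf1 : ∀ m : ℕ, f m ≤ a / (m + 1))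
    (hf2 : ∀ m : ℕ, f m ≤ b / (m + 1) ^ 2) (N : ℕ) :
    ∑' m, f m ≤ a * (1 + log N) + 2 * b / (N + 1) := by
  have ha : 0 ≤ a := by simpa using (hf0 0).trans (hf1 0)
  have hb : 0 ≤ b := by simpa using (hf0 0).trans (hf2 0)
  have head : ∑ m ∈ range N, f m ≤ a * (1 + log N) := calc
    _ ≤ ∑ m ∈ range N, a / (m + 1) := sum_le_sum fun m _ => hf1 m
    _ = a * harmonic N := by simp [harmonic, mul_sum, div_eq_mul_inv]
    _ ≤ _ := mul_le_mul_of_nonneg_left (harmonic_le_one_add_log N) ha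
  have tail (n : ℕ) : ∑ k ∈ range n, f (N + k) ≤ 2 * b / (N + 1) := calc
    _ ≤ ∑ k ∈ range n, b * (((k : ℝ) + N + 1) ^ 2)⁻¹ :=
      sum_le_sum fun k _ => by simpa [div_eq_mul_inv, add_comm] using hf2 (N + k)
    _ = b * ∑ k ∈ range n, (((k : ℝ) + N + 1) ^ 2)⁻¹ := (mul_sum ..).symm
    _ ≤ b * (2 / (N + 1)) := mul_le_mul_of_nonneg_left (sum_range_inv_add_succ_sq_le N n) hb
    _ = _ := by ring
  refine tsum_le_of_sum_range_le hf0 fun n => ?_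
  calc ∑ m ∈ range n, f m ≤ ∑ m ∈ range (N + n), f m :=
        sum_le_sum_of_subset_of_nonneg (range_subset_range.2 (by omega)) fun m _ _ => hf0 m
    _ = ∑ m ∈ range N, f m + ∑ k ∈ range n, f (N + k) := sum_range_add f N n
    _ ≤ _ := add_le_add head (tail n)

lemma exp_neg_le_factorial_div_pow {x : ℝ} (hx : 0 < x) (n : ℕ) : exp (-x) ≤ n ! / x ^ n := by
  rw [exp_neg, ← inv_div]
  exact inv_anti₀ (by positivity) (pow_div_factorial_le_exp x hx.le n)

lemma exp_neg_mul_mul_rpow_neg_le {l t c s : ℝ} (hl : 0 < l) (ht : 0 ≤ t)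
    (hc : l ^ (-s) ≤ c) :
    exp (-l * t) * l ^ (-s) ≤ c :=
  (mul_le_of_le_one_left (rpow_pos_of_pos hl _).le
    (exp_le_one_iff.2 (by nlinarith))).trans hc

lemma exp_neg_mul_mul_rpow_neg_half_le {l t c : ℝ} (hl : 0 < l) (ht : 0 < t) (n m : ℕ)
    (hc : l ^ (-(n / 2 : ℝ)) ≤ c / (m + 1)) :
    exp (-l * t) * l ^ (-(n / 2 : ℝ)) ≤ n ! * c ^ 3 / t ^ n / (m + 1) ^ 2 := by
  set y := l ^ (-(n / 2 : ℝ))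
  have hy : 0 ≤ y := (rpow_pos_of_pos hl _).le
  have hy_sq : y ^ 2 = (l ^ n)⁻¹ := by
    rw [← rpow_natCast y, ← rpow_mul hl.le, ← rpow_natCast l, ← rpow_neg hl.le]
    ring_nf
  calc exp (-l * t) * y ≤ n ! / (l * t) ^ n * y := by
        rw [neg_mul]
        exact mul_le_mul_of_nonneg_right (exp_neg_le_factorial_div_pow (mul_pos hl ht) n) hy
    _ = n ! / t ^ n * y ^ 3 := by rw [pow_succ, hy_sq, mul_pow]; ring
    _ ≤ n ! / t ^ n * (c / (m + 1)) ^ 3 := by gcongr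
    _ = n ! * c ^ 3 / t ^ n / (m + 1) ^ 3 := by rw [div_pow]; ring
    _ ≤ n ! * c ^ 3 / t ^ n / (m + 1) ^ 2 := by
      have hc0 : 0 ≤ c := by simpa using (le_div_iff₀ (Nat.cast_add_one_pos m)).1 (hy.trans hc)
      gcongr <;> norm_num

lemma one_add_log_natCeil_inv_pow_le {t : ℝ} (ht0 : 0 < t) (ht1 : t ≤ 1) (d : ℕ) :
    1 + log ⌈(1 / t) ^ d⌉₊ ≤ (1 + log 2 + d) * (1 + log (1 / t)) := by
  have hx : 1 ≤ (1 / t) ^ d := one_le_pow₀ (one_le_one_div ht0 ht1)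
  have hL : 0 ≤ log (1 / t) := log_nonneg (one_le_one_div ht0 ht1)
  have hlog : log ⌈(1 / t) ^ d⌉₊ ≤ log 2 + d * log (1 / t) := calc
    _ ≤ log (2 * (1 / t) ^ d) :=
      log_le_log (Nat.cast_pos.2 (Nat.ceil_pos.2 (by positivity)))
        (Nat.ceil_le_two_mul (by linarith))
    _ = log 2 + d * log (1 / t) := by rw [log_mul two_ne_zero (by positivity), log_pow]
  nlinarith [mul_nonneg (log_nonneg one_le_two) hL, d.cast_nonneg (α := ℝ)]

lemma div_pow_div_natCeil_inv_pow_succ_le {b t : ℝ} (hb : 0 ≤ b) (ht : 0 < t) (d : ℕ) :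
    b / t ^ d / (⌈(1 / t) ^ d⌉₊ + 1) ≤ b := calc
  _ = b * (1 / t) ^ d / (⌈(1 / t) ^ d⌉₊ + 1) := by ring
  _ ≤ b * (⌈(1 / t) ^ d⌉₊ + 1) / (⌈(1 / t) ^ d⌉₊ + 1) := by
    gcongr
    exact (Nat.le_ceil _).trans (le_add_of_nonneg_right zero_le_one)
  _ = b := by field_simp

theorem stmt9_general (d : ℕ) (C : ℝ) (lam : ℕ → ℝ)
    (hpos : 0 < lam 0) (hmono : Monotone lam)
    (htend : Filter.Tendsto lam Filter.atTop Filter.atTop)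
    (hcount : ∀ x > (0 : ℝ), (({m : ℕ | lam m ≤ x}.ncard : ℝ)) ≤ C * x ^ ((d : ℝ) / 2)) :
    ∃ C' > (0 : ℝ), ∀ t ∈ Set.Ioc (0 : ℝ) 1,
      ∑' m : ℕ, Real.exp (-(lam m) * t) * lam m ^ (-(d : ℝ) / 2) ≤
        C' * (1 + Real.log (1 / t)) := by
  have hlam (m : ℕ) : 0 < lam m := hpos.trans_le (hmono m.zero_le)
  have hweyl := rpow_neg_le_div_succ_of_ncard_le hlam hmono htend hcount
  have hC : 0 < C := by simpa using (rpow_pos_of_pos hpos _).trans_le (hweyl 0)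
  set K := 2 * d ! * C ^ 3
  refine ⟨C * (1 + log 2 + d) + K, by positivity, fun t ⟨ht0, ht1⟩ => ?_⟩
  simp only [neg_div]
  set N := ⌈(1 / t) ^ d⌉₊
  have hL : 0 ≤ log (1 / t) := log_nonneg (one_le_one_div ht0 ht1)
  calc _ ≤ C * (1 + log N) + 2 * (d ! * C ^ 3 / t ^ d) / (N + 1) :=
        tsum_le_of_le_div_succ_of_le_div_succ_sq
          (fun m => mul_nonneg (exp_pos _).le (rpow_pos_of_pos (hlam m) _).le)
          (fun m => exp_neg_mul_mul_rpow_neg_le (hlam m) ht0.le (hweyl m))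
          (fun m => exp_neg_mul_mul_rpow_neg_half_le (hlam m) ht0 d m (hweyl m)) N
    _ = C * (1 + log N) + 2 * d ! * C ^ 3 / t ^ d / (N + 1) := by ring
    _ ≤ C * ((1 + log 2 + d) * (1 + log (1 / t))) + K := by
      gcongr
      · exact one_add_log_natCeil_inv_pow_le ht0 ht1 d
      · exact div_pow_div_natCeil_inv_pow_succ_le (by positivity) ht0 d
    _ ≤ _ := by nlinarith [mul_nonneg (by positivity : 0 ≤ K) hL]

/-- borderline logarithmic heat-trace-type estimate under a Weyl-law
counting bound.  The sequence `lam 0 ≤ lam 1 ≤ ⋯` plays the role of `λ₁ ≤ λ₂ ≤ ⋯`. -/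
theorem stmt9 (d : ℕ) (hd : 1 ≤ d) (C : ℝ) (lam : ℕ → ℝ)
    (hpos : 0 < lam 0) (hmono : Monotone lam)
    (htend : Filter.Tendsto lam Filter.atTop Filter.atTop)
    (hcount : ∀ x > (0 : ℝ), (({m : ℕ | lam m ≤ x}.ncard : ℝ)) ≤ C * x ^ ((d : ℝ) / 2)) :
    ∃ C' > (0 : ℝ), ∀ t ∈ Set.Ioc (0 : ℝ) 1,
      ∑' m : ℕ, Real.exp (-(lam m) * t) * lam m ^ (-(d : ℝ) / 2) ≤
        C' * (1 + Real.log (1 / t)) :=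
  stmt9_general d C lam hpos hmono htend hcount
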